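/- A Boolean function f : {0,1}^n → {0,1} that has a debate with verifier decision-tree depth at most a·log₂(n) admits a debate of transcript length at most 2·n^a rounds with the same verifier depth. -/

import Mathlib

/-!
A verifier of depth `ℓ` queries fewer than `2 ^ ℓ` variables, so in a debate with more than
`2 ^ ℓ` rounds some round is never queried. Both players' moves in that round are irrelevant,
so the round can be deleted from the game (and the verifier's variables renumbered) without
changing who wins. Repeating this brings the number of rounds down to `2 ^ ℓ ≤ n ^ a`.
-/

/-- A deterministic decision tree over `m` Boolean variables. -/
inductive DT (m : ℕ) : Type where
  | leaf : Bool → DT m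
  | node : Fin m → DT m → DT m → DT m

/-- Evaluation of a decision tree on an input. -/
def DT.eval {m : ℕ} : DT m → (Fin m → Bool) → Bool
  | .leaf b, _ => b
  | .node i t0 t1, x => if x i then t1.eval x else t0.eval x

/-- Depth of a decision tree: maximum number of queries on a root-to-leaf path. -/
def DT.depth {m : ℕ} : DT m → ℕ
  | .leaf _ => 0
  | .node _ t0 t1 => max t0.depth t1.depth + 1

/-- The set of variables queried anywhere in the tree. -/
def DT.vars {m : ℕ} : DT m → Finset (Fin m)
  | .leaf _ => ∅
  | .node i t0 t1 => insert i (t0.vars ∪ t1.vars)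

/-- Number of internal (query) nodes of a decision tree. -/
def DT.numNodes {m : ℕ} : DT m → ℕ
  | .leaf _ => 0
  | .node _ t0 t1 => t0.numNodes + t1.numNodes + 1

/-- `f` depends on variable `i` if flipping bit `i` can change the value of `f`. -/
def DT.DependsOn {m : ℕ} (f : (Fin m → Bool) → Bool) (i : Fin m) : Prop :=
  ∃ x : Fin m → Bool, f x ≠ f (Function.update x i (!x i))

/-- The winning condition for Prover 1: `∀ α₁ ∃ β₁ … ∀ α_k ∃ β_k, V(α,β) = true`. -/
def AWins : ℕ → (List Bool → Bool) → Prop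
  | 0, V => V [] = true
  | k + 1, V => ∀ a : Bool, ∃ b : Bool, AWins k (fun t => V (a :: b :: t))

/-- The winning condition for Prover 0: `∃ α₁ ∀ β₁ … ∃ α_k ∀ β_k, V(α,β) = false`. -/
def BWins : ℕ → (List Bool → Bool) → Prop
  | 0, V => V [] = false
  | k + 1, V => ∃ a : Bool, ∀ b : Bool, BWins k (fun t => V (a :: b :: t))

/-- Assemble the input `x` together with the `2k` transcript bits
`α₁, β₁, …, α_k, β_k` into a single input of length `n + 2k`. -/
def assemble (n k : ℕ) (x : Fin n → Bool) (t : List Bool) : Fin (n + 2 * k) → Bool :=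
  fun j => if h : (j : ℕ) < n then x ⟨j, h⟩ else t.getD ((j : ℕ) - n) false

/-- A `(k,ℓ)`-debate for `f`: a verifier given by a decision tree of depth at most `ℓ`
on the input bits and the `2k` transcript bits, satisfying the alternating-quantifier
winning conditions. -/
def IsDebate (n k ℓ : ℕ) (f : (Fin n → Bool) → Bool) : Prop :=
  ∃ T : DT (n + 2 * k), T.depth ≤ ℓ ∧
    ∀ x : Fin n → Bool,
      (f x = true → AWins k (fun t => T.eval (assemble n k x t))) ∧
      (f x = false → BWins k (fun t => T.eval (assemble n k x t)))

/-- Debate query complexity: the least verifier depth `ℓ` over all `(k,ℓ)`-debates for `f`. -/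
noncomputable def DQC (n : ℕ) (f : (Fin n → Bool) → Bool) : ℕ :=
  sInf {ℓ | ∃ k, IsDebate n k ℓ f}

namespace DT

def relabel {m m' : ℕ} (σ : Fin m → Fin m') : DT m → DT m'
  | .leaf b => .leaf b
  | .node i t0 t1 => .node (σ i) (relabel σ t0) (relabel σ t1)

theorem eval_relabel {m m' : ℕ} (σ : Fin m → Fin m') (T : DT m) (x : Fin m' → Bool) :
    (T.relabel σ).eval x = T.eval (x ∘ σ) := by
  induction T with
  | leaf b => rfl
  | node i t0 t1 ih0 ih1 => simp [relabel, eval, ih0, ih1]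

theorem depth_relabel {m m' : ℕ} (σ : Fin m → Fin m') (T : DT m) :
    (T.relabel σ).depth = T.depth := by
  induction T with
  | leaf b => rfl
  | node i t0 t1 ih0 ih1 => simp [relabel, depth, ih0, ih1]

theorem eval_congr {m : ℕ} (T : DT m) {x y : Fin m → Bool} (h : ∀ i ∈ T.vars, x i = y i) :
    T.eval x = T.eval y := by
  induction T with
  | leaf b => rfl
  | node i t0 t1 ih0 ih1 =>
    simp only [vars, Finset.mem_insert, Finset.mem_union] at h
    simp only [eval, h i (Or.inl rfl)]
    split
    · exact ih1 fun p hp => h p (Or.inr (Or.inr hp))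
    · exact ih0 fun p hp => h p (Or.inr (Or.inl hp))

theorem card_vars_le_numNodes {m : ℕ} (T : DT m) : T.vars.card ≤ T.numNodes := by
  induction T with
  | leaf b => simp [vars, numNodes]
  | node i t0 t1 ih0 ih1 =>
    calc (insert i (t0.vars ∪ t1.vars)).card ≤ (t0.vars ∪ t1.vars).card + 1 :=
          Finset.card_insert_le _ _
      _ ≤ t0.vars.card + t1.vars.card + 1 := by grw [Finset.card_union_le]
      _ ≤ t0.numNodes + t1.numNodes + 1 := by omega

theorem numNodes_lt_two_pow_depth {m : ℕ} (T : DT m) : T.numNodes < 2 ^ T.depth := by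
  induction T with
  | leaf b => simp [numNodes, depth]
  | node i t0 t1 ih0 ih1 =>
    have h0 : 2 ^ t0.depth ≤ 2 ^ max t0.depth t1.depth :=
      Nat.pow_le_pow_right two_pos (le_max_left ..)
    have h1 : 2 ^ t1.depth ≤ 2 ^ max t0.depth t1.depth :=
      Nat.pow_le_pow_right two_pos (le_max_right ..)
    simp only [numNodes, depth, pow_succ]
    omega

theorem card_vars_lt_two_pow_depth {m : ℕ} (T : DT m) : T.vars.card < 2 ^ T.depth :=
  T.card_vars_le_numNodes.trans_lt T.numNodes_lt_two_pow_depth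

/-- Round `j` occupies the variables `n + 2 * j` and `n + 2 * j + 1`. -/
theorem exists_round_not_queried {m K : ℕ} (n : ℕ) (T : DT m) (hK : 2 ^ T.depth ≤ K) :
    ∃ j < K, ∀ p ∈ T.vars, (p : ℕ) < n + 2 * j ∨ n + 2 * j + 2 ≤ p := by
  have hcard :
      (T.vars.image fun p : Fin m => ((p : ℕ) - n) / 2).card < (Finset.range K).card := by
    grw [Finset.card_image_le, Finset.card_range, card_vars_lt_two_pow_depth]
    exact hK
  obtain ⟨j, hjK, hj⟩ := Finset.exists_mem_notMem_of_card_lt_card hcard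
  refine ⟨j, Finset.mem_range.mp hjK, fun p hp => ?_⟩
  by_contra! hround
  exact hj (Finset.mem_image.mpr ⟨p, hp, by omega⟩)

end DT

theorem AWins.of_dropRound : ∀ {j k : ℕ} {V W : List Bool → Bool}, j ≤ k →
    (∀ s u a b, s.length = 2 * j → V (s ++ a :: b :: u) = W (s ++ u)) →
    AWins (k + 1) V → AWins k W
  | 0, _, V, W, _, hVW, hV => by
    obtain ⟨b, hb⟩ := hV false
    rwa [show (fun t => V (false :: b :: t)) = W from funext fun u => hVW [] u false b rfl] at hb
  | _ + 1, 0, _, _, hjk, _, _ => absurd hjk (by omega)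
  | j + 1, _ + 1, _, _, hjk, hVW, hV => fun a =>
    have ⟨b, hb⟩ := hV a
    ⟨b, of_dropRound (j := j) (by omega)
      (fun s u a' b' hs => hVW (a :: b :: s) u a' b' (by simp [hs]; ring)) hb⟩

theorem BWins.of_dropRound : ∀ {j k : ℕ} {V W : List Bool → Bool}, j ≤ k →
    (∀ s u a b, s.length = 2 * j → V (s ++ a :: b :: u) = W (s ++ u)) →
    BWins (k + 1) V → BWins k W
  | 0, _, V, W, _, hVW, hV => by
    obtain ⟨a, ha⟩ := hV
    have hb := ha false
    rwa [show (fun t => V (a :: false :: t)) = W from funext fun u => hVW [] u a false rfl] at hb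
  | _ + 1, 0, _, _, hjk, _, _ => absurd hjk (by omega)
  | j + 1, _ + 1, _, _, hjk, hVW, hV =>
    have ⟨a, ha⟩ := hV
    ⟨a, fun b => of_dropRound (j := j) (by omega)
      (fun s u a' b' hs => hVW (a :: b :: s) u a' b' (by simp [hs]; ring)) (ha b)⟩

/-- Renumbering of the variables that deletes round `j`; its value on round `j` itself is
irrelevant. -/
def collapseRound {n k j : ℕ} (hj : j < k) (p : Fin (n + 2 * (k + 1))) : Fin (n + 2 * k) :=
  if h : (p : ℕ) < n + 2 * j then ⟨p, by omega⟩ else ⟨p - 2, by have := p.isLt; omega⟩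

theorem assemble_append_cons_cons {n k j : ℕ} (hj : j < k) (x : Fin n → Bool)
    {s : List Bool} (hs : s.length = 2 * j) (u : List Bool) (a b : Bool)
    {p : Fin (n + 2 * (k + 1))} (hp : (p : ℕ) < n + 2 * j ∨ n + 2 * j + 2 ≤ p) :
    assemble n (k + 1) x (s ++ a :: b :: u) p =
      assemble n k x (s ++ u) (collapseRound hj p) := by
  rcases lt_or_ge (p : ℕ) n with hpn | hpn
  · simp [assemble, collapseRound, hpn, show (p : ℕ) < n + 2 * j by omega]
  rcases hp with hp | hp
  · simp only [assemble, collapseRound, hp, not_lt.mpr hpn, reduceDIte]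
    rw [List.getD_append _ _ _ _ (by omega), List.getD_append _ _ _ _ (by omega)]
  · simp only [assemble, collapseRound, show ¬(p : ℕ) < n + 2 * j by omega,
      show ¬(p : ℕ) - 2 < n by omega, not_lt.mpr hpn, reduceDIte]
    rw [List.getD_append_right _ _ _ _ (by omega), List.getD_append_right _ _ _ _ (by omega),
      show (p : ℕ) - n - s.length = (p - 2 - n - s.length) + 2 by omega]
    rfl

theorem isDebate_of_round_not_queried {n k ℓ j : ℕ} {f : (Fin n → Bool) → Bool} (hj : j < k)
    (T : DT (n + 2 * (k + 1))) (hd : T.depth ≤ ℓ)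
    (hT : ∀ p ∈ T.vars, (p : ℕ) < n + 2 * j ∨ n + 2 * j + 2 ≤ p)
    (hw : ∀ x : Fin n → Bool,
      (f x = true → AWins (k + 1) (fun t => T.eval (assemble n (k + 1) x t))) ∧
      (f x = false → BWins (k + 1) (fun t => T.eval (assemble n (k + 1) x t)))) :
    IsDebate n k ℓ f := by
  refine ⟨T.relabel (collapseRound hj), (T.depth_relabel _).trans_le hd, fun x => ?_⟩
  have hVW : ∀ s u a b, s.length = 2 * j →
      T.eval (assemble n (k + 1) x (s ++ a :: b :: u)) =
        (T.relabel (collapseRound hj)).eval (assemble n k x (s ++ u)) := fun s u a b hs => by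
    rw [DT.eval_relabel]
    exact T.eval_congr fun p hp => assemble_append_cons_cons hj x hs u a b (hT p hp)
  exact ⟨fun hf => AWins.of_dropRound hj.le hVW ((hw x).1 hf),
    fun hf => BWins.of_dropRound hj.le hVW ((hw x).2 hf)⟩

theorem IsDebate.exists_rounds_le {n ℓ N : ℕ} {f : (Fin n → Bool) → Bool}
    (hN : 2 ^ ℓ ≤ N) : ∀ {k : ℕ}, IsDebate n k ℓ f → ∃ k' ≤ N, IsDebate n k' ℓ f
  | 0, h => ⟨0, Nat.zero_le _, h⟩
  | k + 1, h => by
    by_cases hk : k + 1 ≤ N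
    · exact ⟨k + 1, hk, h⟩
    obtain ⟨T, hd, hw⟩ := h
    obtain ⟨j, hj, hT⟩ := DT.exists_round_not_queried (K := k) n T
      ((Nat.pow_le_pow_right two_pos hd).trans (by omega))
    exact exists_rounds_le hN (isDebate_of_round_not_queried hj T hd hT hw)

theorem isDebate_fin_zero (ℓ : ℕ) (f : (Fin 0 → Bool) → Bool) : IsDebate 0 0 ℓ f := by
  refine ⟨.leaf (f finZeroElim), Nat.zero_le _, fun x => ?_⟩
  rw [Subsingleton.elim x finZeroElim]
  exact ⟨id, id⟩

/-- A debate with verifier depth at most `a · log₂ n` can be converted into a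
debate of transcript length at most `2 · n^a` bits with the same verifier depth. -/
theorem stmt_11 (n a k ℓ : ℕ) (f : (Fin n → Bool) → Bool)
    (hℓ : ℓ ≤ a * Nat.log 2 n) (h : IsDebate n k ℓ f) :
    ∃ k' : ℕ, 2 * k' ≤ 2 * n ^ a ∧ IsDebate n k' ℓ f := by
  rcases Nat.eq_zero_or_pos n with rfl | hn
  · -- `2 ^ ℓ ≤ 0 ^ a` fails for `a > 0`, but a function of no variables needs no rounds.
    exact ⟨0, Nat.zero_le _, isDebate_fin_zero ℓ f⟩
  have hpow : 2 ^ ℓ ≤ n ^ a :=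
    calc 2 ^ ℓ ≤ 2 ^ (a * Nat.log 2 n) := Nat.pow_le_pow_right two_pos hℓ
      _ = (2 ^ Nat.log 2 n) ^ a := by rw [← pow_mul, mul_comm]
      _ ≤ n ^ a := Nat.pow_le_pow_left (Nat.pow_log_le_self 2 hn.ne') a
  obtain ⟨k', hk', hdeb⟩ := h.exists_rounds_le hpow
  exact ⟨k', by omega, hdeb⟩
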